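/- For 0 ≤ μ ≤ 1, the two-qubit pure state |ψ⟩ = √((1−μ)/2)(|00⟩+|11⟩) + √(μ/2)(i|01⟩ − i|10⟩) satisfies Tr(P_s ψ) = 1−μ, Tr(P_as ψ) = μ, and F(ψ_A, ψ_B) = |1 − 2μ|, so the bound F(ψ_A,ψ_B) ≥ |Tr(P_as ψ) − Tr(P_s ψ)| is attained with equality. -/

import Mathlib

open scoped Matrix Kronecker ComplexOrder

noncomputable section

namespace QEMD

variable {m n : Type*} [Fintype m] [Fintype n] [DecidableEq m] [DecidableEq n]

/-- Total square root: the PSD square root if `A` is PSD, else `0`. -/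
def msqrt (A : Matrix n n ℂ) : Matrix n n ℂ :=
  letI := Classical.dec A.PosSemidef
  if h : A.PosSemidef then
    (h.1.eigenvectorUnitary : Matrix n n ℂ) *
      Matrix.diagonal (((↑) : ℝ → ℂ) ∘ Real.sqrt ∘ h.1.eigenvalues) *
      (star h.1.eigenvectorUnitary : Matrix n n ℂ)
  else 0

/-- Trace norm `‖A‖₁ = Tr √(AᴴA)`. -/
def traceNorm (A : Matrix n n ℂ) : ℝ :=
  ((msqrt (Aᴴ * A)).trace).re

/-- Trace distance `D(ρ,σ) = ½‖ρ-σ‖₁`. -/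
def traceDist (ρ σ : Matrix n n ℂ) : ℝ := traceNorm (ρ - σ) / 2

/-- Fidelity `F(ρ,σ) = Tr √(√ρ σ √ρ)`. -/
def fidelity (ρ σ : Matrix n n ℂ) : ℝ :=
  ((msqrt (msqrt ρ * σ * msqrt ρ)).trace).re

/-- Density matrix predicate. -/
def IsDensity (ρ : Matrix n n ℂ) : Prop := ρ.PosSemidef ∧ ρ.trace = 1

/-- Projector `|v⟩⟨v|` onto a vector. -/
def proj (v : n → ℂ) : Matrix n n ℂ := Matrix.of fun i j => v i * star (v j)

/-- Partial trace over the first (left) factor. -/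
def traceLeft (ρ : Matrix (m × n) (m × n) ℂ) : Matrix n n ℂ :=
  Matrix.of fun i j => ∑ k, ρ (k, i) (k, j)

/-- Partial trace over the second (right) factor. -/
def traceRight (ρ : Matrix (m × n) (m × n) ℂ) : Matrix m m ℂ :=
  Matrix.of fun i j => ∑ k, ρ (i, k) (j, k)

/-- The swap operator `S|αβ⟩ = |βα⟩` on `ℂ^d ⊗ ℂ^d`. -/
def swap (d : ℕ) : Matrix (Fin d × Fin d) (Fin d × Fin d) ℂ :=
  Matrix.of fun p q => if p.1 = q.2 ∧ p.2 = q.1 then 1 else 0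

/-- Projection onto the symmetric subspace, `P_s = (I + S)/2`. -/
def Psym (d : ℕ) : Matrix (Fin d × Fin d) (Fin d × Fin d) ℂ := (2:ℂ)⁻¹ • (1 + swap d)

/-- Projection onto the antisymmetric subspace, `P_as = (I - S)/2`. -/
def Pasym (d : ℕ) : Matrix (Fin d × Fin d) (Fin d × Fin d) ℂ := (2:ℂ)⁻¹ • (1 - swap d)

/-- `ρAB` is a quantum coupling of `ρA` and `ρB`. -/
def IsCoupling (ρAB : Matrix (m × n) (m × n) ℂ) (ρA : Matrix m m ℂ)
    (ρB : Matrix n n ℂ) : Prop :=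
  IsDensity ρAB ∧ traceRight ρAB = ρA ∧ traceLeft ρAB = ρB

/-- The maximally entangled vector `|Φ⟩ = (1/√d) ∑ᵢ |i⟩|i⟩`. -/
def maxEnt (d : ℕ) : Fin d × Fin d → ℂ :=
  fun p => if p.1 = p.2 then ((1 / Real.sqrt d : ℝ) : ℂ) else 0

/-!
Write `ψ = a (|00⟩ + |11⟩) + b (i|01⟩ - i|10⟩)` with `a² = (1 - μ)/2`, `b² = μ/2`. The swap fixes
the `a`-part and negates the `b`-part, so `Tr(P_s ψ) = 2a²` and `Tr(P_as ψ) = 2b²`. The marginal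
`ρ = ψ_A` is a trace-one `2 × 2` matrix with `ψ_B = 1 - ρ`, and by Cayley–Hamilton
`ρ - ρ² = det ρ • 1`; hence `√ρ ψ_B √ρ = det ρ • 1` and `F(ψ_A, ψ_B) = 2 √(det ρ) = 2 |a² - b²|`.
-/

section

open scoped MatrixOrder

lemma msqrt_eq_cfcSqrt {A : Matrix n n ℂ} (hA : A.PosSemidef) : msqrt A = CFC.sqrt A := by
  rw [msqrt, dif_pos hA, CFC.sqrt_eq_cfc, cfc_nnreal_eq_real _ A hA.nonneg, hA.1.cfc_eq]
  simp only [Matrix.IsHermitian.cfc, Unitary.conjStarAlgAut_apply, Real.coe_sqrt,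
    Real.coe_toNNReal']
  congr 3
  funext i
  simp [max_eq_left (hA.eigenvalues_nonneg i)]

lemma msqrt_mul_self {A : Matrix n n ℂ} (hA : A.PosSemidef) : msqrt A * msqrt A = A := by
  rw [msqrt_eq_cfcSqrt hA]
  exact CFC.sqrt_mul_sqrt_self A hA.nonneg

lemma msqrt_eq_of_mul_self_eq {A B : Matrix n n ℂ} (hB : B.PosSemidef) (h : B * B = A) :
    msqrt A = B := by
  have hA : A.PosSemidef := by rw [← h, ← pow_two]; exact hB.pow 2
  rw [msqrt_eq_cfcSqrt hA]
  exact CFC.sqrt_unique h hB.nonneg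

end

lemma msqrt_ofReal_smul_one {r : ℝ} (hr : 0 ≤ r) :
    msqrt ((r : ℂ) • (1 : Matrix n n ℂ)) = (Real.sqrt r : ℂ) • 1 := by
  refine msqrt_eq_of_mul_self_eq (Matrix.PosSemidef.one.smul (by simp)) ?_
  rw [smul_mul_smul_comm, one_mul, ← Complex.ofReal_mul, Real.mul_self_sqrt hr]

lemma _root_.Matrix.mul_self_eq_trace_smul_sub_det_smul_one {R : Type*} [CommRing R]
    (A : Matrix (Fin 2) (Fin 2) R) : A * A = A.trace • A - A.det • 1 := by
  ext i j
  fin_cases i <;> fin_cases j <;>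
    simp [Matrix.mul_apply, Matrix.trace_fin_two, Matrix.det_fin_two] <;> ring

theorem fidelity_one_sub_of_trace_eq_one {ρ : Matrix (Fin 2) (Fin 2) ℂ} (hρ : ρ.PosSemidef)
    (htr : ρ.trace = 1) : fidelity ρ (1 - ρ) = 2 * Real.sqrt ρ.det.re := by
  obtain ⟨hdet_re, hdet_im⟩ := Complex.nonneg_iff.mp hρ.det_nonneg
  have hdet : ρ.det = (ρ.det.re : ℂ) := Complex.ext rfl (by simp [← hdet_im])
  set s := msqrt ρ
  have hs : s * s = ρ := msqrt_mul_self hρ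
  have hconj : s * (1 - ρ) * s = (ρ.det.re : ℂ) • 1 := by
    calc s * (1 - ρ) * s = ρ - ρ * ρ := by rw [← hs]; noncomm_ring
      _ = (ρ.det.re : ℂ) • 1 := by
        rw [Matrix.mul_self_eq_trace_smul_sub_det_smul_one, htr, one_smul, ← hdet, sub_sub_cancel]
  rw [fidelity, hconj, msqrt_ofReal_smul_one hdet_re]
  simp [mul_comm]

lemma traceRight_proj_posSemidef {ι κ : Type*} [Fintype ι] [Fintype κ] (ψ : ι × κ → ℂ) :
    (traceRight (proj ψ)).PosSemidef := by
  have h : traceRight (proj ψ) = (Matrix.of fun i k => ψ (i, k)) *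
      (Matrix.of fun i k => ψ (i, k))ᴴ := by
    ext i j
    simp [traceRight, proj, Matrix.mul_apply]
  rw [h]
  exact Matrix.posSemidef_self_mul_conjTranspose _

def twoQubitState (a b : ℝ) : Fin 2 × Fin 2 → ℂ := fun p =>
  if p.1 = p.2 then (a : ℂ) else if p = (0, 1) then Complex.I * b else -Complex.I * b

section twoQubitState

variable (a b : ℝ)

lemma trace_Psym_mul_proj_twoQubitState :
    (Psym 2 * proj (twoQubitState a b)).trace = 2 * (a : ℂ) ^ 2 := by
  simp [Psym, swap, proj, twoQubitState, Matrix.trace, Matrix.mul_apply, Fintype.sum_prod_type,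
    Matrix.one_apply, Prod.ext_iff]
  ring

lemma trace_Pasym_mul_proj_twoQubitState :
    (Pasym 2 * proj (twoQubitState a b)).trace = 2 * (b : ℂ) ^ 2 := by
  simp [Pasym, swap, proj, twoQubitState, Matrix.trace, Matrix.mul_apply, Fintype.sum_prod_type,
    Matrix.one_apply, Prod.ext_iff]
  linear_combination (-2 * (b : ℂ) ^ 2) * Complex.I_sq

lemma traceRight_proj_twoQubitState : traceRight (proj (twoQubitState a b)) =
    !![(a : ℂ) ^ 2 + b ^ 2, 2 * a * b * Complex.I;
      -(2 * a * b * Complex.I), (a : ℂ) ^ 2 + b ^ 2] := by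
  ext i j
  fin_cases i <;> fin_cases j <;> simp [traceRight, proj, twoQubitState] <;>
    first | ring1 | linear_combination (-(b : ℂ) ^ 2) * Complex.I_sq

lemma traceLeft_proj_twoQubitState : traceLeft (proj (twoQubitState a b)) =
    !![(a : ℂ) ^ 2 + b ^ 2, -(2 * a * b * Complex.I);
      2 * a * b * Complex.I, (a : ℂ) ^ 2 + b ^ 2] := by
  ext i j
  fin_cases i <;> fin_cases j <;> simp [traceLeft, proj, twoQubitState] <;>
    first | ring1 | linear_combination (-(b : ℂ) ^ 2) * Complex.I_sq

lemma trace_traceRight_proj_twoQubitState :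
    (traceRight (proj (twoQubitState a b))).trace = 2 * ((a : ℂ) ^ 2 + b ^ 2) := by
  rw [traceRight_proj_twoQubitState, Matrix.trace_fin_two_of]
  ring

lemma det_traceRight_proj_twoQubitState :
    (traceRight (proj (twoQubitState a b))).det = ((a : ℂ) ^ 2 - b ^ 2) ^ 2 := by
  rw [traceRight_proj_twoQubitState, Matrix.det_fin_two_of]
  linear_combination (4 * (a : ℂ) ^ 2 * b ^ 2) * Complex.I_sq

lemma traceLeft_proj_twoQubitState_eq_one_sub (h : (a : ℂ) ^ 2 + b ^ 2 = 1 / 2) :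
    traceLeft (proj (twoQubitState a b)) = 1 - traceRight (proj (twoQubitState a b)) := by
  rw [traceLeft_proj_twoQubitState, traceRight_proj_twoQubitState]
  ext i j
  fin_cases i <;> fin_cases j <;> simp <;> first | ring1 | linear_combination 2 * h

theorem fidelity_traceRight_traceLeft_twoQubitState (h : a ^ 2 + b ^ 2 = 1 / 2) :
    fidelity (traceRight (proj (twoQubitState a b))) (traceLeft (proj (twoQubitState a b))) =
      2 * |a ^ 2 - b ^ 2| := by
  have hc : (a : ℂ) ^ 2 + b ^ 2 = 1 / 2 := by
    simpa using congrArg ((↑) : ℝ → ℂ) h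
  have htr : (traceRight (proj (twoQubitState a b))).trace = 1 := by
    rw [trace_traceRight_proj_twoQubitState, hc]
    norm_num
  rw [traceLeft_proj_twoQubitState_eq_one_sub a b hc,
    fidelity_one_sub_of_trace_eq_one (traceRight_proj_posSemidef _) htr,
    det_traceRight_proj_twoQubitState, ← Complex.ofReal_pow, ← Complex.ofReal_pow,
    ← Complex.ofReal_sub, ← Complex.ofReal_pow, Complex.ofReal_re, Real.sqrt_sq_eq_abs]

end twoQubitState

theorem stmt5 (μ : ℝ) (hμ0 : 0 ≤ μ) (hμ1 : μ ≤ 1)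
    (ψ : Fin 2 × Fin 2 → ℂ)
    (hψ : ψ = fun p =>
      if p.1 = p.2 then ((Real.sqrt ((1 - μ) / 2) : ℝ) : ℂ)
      else if p = (0, 1) then Complex.I * ((Real.sqrt (μ / 2) : ℝ) : ℂ)
      else -Complex.I * ((Real.sqrt (μ / 2) : ℝ) : ℂ)) :
    (Psym 2 * proj ψ).trace = ((1 - μ : ℝ) : ℂ) ∧
    (Pasym 2 * proj ψ).trace = ((μ : ℝ) : ℂ) ∧
    fidelity (traceRight (proj ψ)) (traceLeft (proj ψ)) = |1 - 2 * μ| := by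
  obtain rfl : ψ = twoQubitState (Real.sqrt ((1 - μ) / 2)) (Real.sqrt (μ / 2)) := hψ
  have ha : Real.sqrt ((1 - μ) / 2) ^ 2 = (1 - μ) / 2 := Real.sq_sqrt (by linarith)
  have hb : Real.sqrt (μ / 2) ^ 2 = μ / 2 := Real.sq_sqrt (by linarith)
  refine ⟨?_, ?_, ?_⟩
  · rw [trace_Psym_mul_proj_twoQubitState, ← Complex.ofReal_pow, ha]
    push_cast
    ring
  · rw [trace_Pasym_mul_proj_twoQubitState, ← Complex.ofReal_pow, hb]
    push_cast
    ring
  · rw [fidelity_traceRight_traceLeft_twoQubitState _ _ (by rw [ha, hb]; ring), ha, hb,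
      show (1 - μ) / 2 - μ / 2 = (1 - 2 * μ) / 2 by ring, abs_div, abs_two]
    ring
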